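/- For 0 < q < p ≤ 1 and natural numbers m, n ≥ 1, the (p,q)-Beta function satisfies B_{p,q}(m, n+1) = p^{n-1} B_{p,q}(m, n) - q^n B_{p,q}(m+1, n). -/

import Mathlib

noncomputable section

/-- The (p,q)-number [n]_{p,q} = (p^n - q^n)/(p - q). -/
def pqNum (p q : ℝ) (n : ℕ) : ℝ := (p ^ n - q ^ n) / (p - q)

/-- The (p,q)-factorial [n]_{p,q}!. -/
def pqFactorial (p q : ℝ) (n : ℕ) : ℝ := ∏ k ∈ Finset.range n, pqNum p q (k + 1)

/-- The (p,q)-binomial coefficient. -/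
def pqBinom (p q : ℝ) (n k : ℕ) : ℝ :=
  pqFactorial p q n / (pqFactorial p q (n - k) * pqFactorial p q k)

/-- The (p,q)-power basis (a ⊖ b)^n_{p,q} = ∏_{j=0}^{n-1} (p^j a - q^j b). -/
def pqPow (p q a b : ℝ) (n : ℕ) : ℝ := ∏ j ∈ Finset.range n, (p ^ j * a - q ^ j * b)

/-- The (p,q)-derivative. -/
def pqDeriv (p q : ℝ) (f : ℝ → ℝ) (x : ℝ) : ℝ := (f (p * x) - f (q * x)) / ((p - q) * x)

/-- The (p,q)-integral of f over [0,1] (case 0 < q < p). -/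
def pqInt (p q : ℝ) (f : ℝ → ℝ) : ℝ :=
  (p - q) * ∑' k : ℕ, (q ^ k / p ^ (k + 1)) * f (q ^ k / p ^ (k + 1))

/-- The (p,q)-Beta function B_{p,q}(m,n) = ∫₀¹ x^{m-1} (1 ⊖ qx)^{n-1} d_{p,q}x. -/
def pqBeta (p q : ℝ) (m n : ℕ) : ℝ :=
  pqInt p q (fun x => x ^ (m - 1) * pqPow p q 1 (q * x) (n - 1))

/-- The (p,q)-Gamma function: Γ_{p,q}(n+1) = [n]_{p,q}!. -/
def pqGamma (p q : ℝ) (n : ℕ) : ℝ := pqFactorial p q (n - 1)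

/-- The (p,q)-Bernstein basis b_{n,k}^{p,q}(1,x). -/
def bBasis (p q : ℝ) (n k : ℕ) (x : ℝ) : ℝ :=
  pqBinom p q n k * p ^ (k * (k - 1) / 2) / p ^ (n * (n - 1) / 2) * x ^ k *
    pqPow p q 1 x (n - k)

/-- The kernel b_{n,k}^{p,q}(t) = [n choose k] t^k (1 ⊖ qt)^{n-k}. -/
def bKernel (p q : ℝ) (n k : ℕ) (t : ℝ) : ℝ :=
  pqBinom p q n k * t ^ k * pqPow p q 1 (q * t) (n - k)

/-- The (p,q)-Bernstein operator B_{n,p,q}(f,x). -/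
def pqBernstein (p q : ℝ) (n : ℕ) (f : ℝ → ℝ) (x : ℝ) : ℝ :=
  ∑ k ∈ Finset.range (n + 1),
    bBasis p q n k x * f (p ^ (n - k) * pqNum p q k / pqNum p q n)

/-- The (p,q)-Bernstein-Durrmeyer operator D_n^{p,q}(f,x). -/
def pqDurrmeyer (p q : ℝ) (n : ℕ) (f : ℝ → ℝ) (x : ℝ) : ℝ :=
  pqNum p q (n + 1) *
    ∑ k ∈ Finset.Icc 1 n, (p ^ ((n - k + 1) * (n + k) / 2))⁻¹ * bBasis p q n k x *
      pqInt p q (fun t => bKernel p q n (k - 1) t * f t)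
  + bBasis p q n 0 x * f 0

/-! The recurrence is the last factor of the product
(1 ⊖ qx)^n = (1 ⊖ qx)^{n-1} (p^{n-1} - q^n x), so the integrand of B(m, n+1) is p^{n-1} times
that of B(m, n) minus q^n times that of B(m+1, n).
It remains to split the (p,q)-integral, i.e. the series over the nodes q^k / p^(k+1): these lie in
[0, 1/p] and decay like (q/p)^k, so any continuous integrand gives an absolutely summable series. -/

lemma pqPow_succ (p q a b : ℝ) (n : ℕ) :
    pqPow p q a b (n + 1) = pqPow p q a b n * (p ^ n * a - q ^ n * b) :=
  Finset.prod_range_succ _ _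

@[fun_prop]
lemma continuous_pqPow (p q a : ℝ) (n : ℕ) : Continuous fun b => pqPow p q a b n := by
  unfold pqPow
  fun_prop

lemma summable_pqInt {p q : ℝ} (hq : 0 ≤ q) (hqp : q < p) {f : ℝ → ℝ}
    (hf : ContinuousOn f (Set.Icc 0 p⁻¹)) :
    Summable fun k : ℕ => q ^ k / p ^ (k + 1) * f (q ^ k / p ^ (k + 1)) := by
  have hp : 0 < p := hq.trans_lt hqp
  have node_eq : ∀ k : ℕ, q ^ k / p ^ (k + 1) = p⁻¹ * (q / p) ^ k := fun k => by
    rw [div_pow, pow_succ]; field_simp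
  have node_mem : ∀ k : ℕ, q ^ k / p ^ (k + 1) ∈ Set.Icc 0 p⁻¹ := fun k => by
    rw [node_eq]
    refine ⟨by positivity, mul_le_of_le_one_right (by positivity) ?_⟩
    exact pow_le_one₀ (by positivity) ((div_le_one hp).2 hqp.le)
  obtain ⟨C, hC⟩ := isCompact_Icc.exists_bound_of_continuousOn hf
  refine Summable.of_norm_bounded
    ((summable_geometric_of_lt_one (by positivity) ((div_lt_one hp).2 hqp)).mul_left (p⁻¹ * C))
    fun k => ?_
  have hfk := hC _ (node_mem k)
  calc ‖q ^ k / p ^ (k + 1) * f (q ^ k / p ^ (k + 1))‖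
      = p⁻¹ * (q / p) ^ k * ‖f (q ^ k / p ^ (k + 1))‖ := by
        rw [norm_mul, Real.norm_of_nonneg (node_mem k).1, node_eq]
    _ ≤ p⁻¹ * (q / p) ^ k * C := by gcongr
    _ = p⁻¹ * C * (q / p) ^ k := by ring

lemma pqInt_mul_sub_mul {p q : ℝ} (hq : 0 ≤ q) (hqp : q < p) {f g : ℝ → ℝ}
    (hf : ContinuousOn f (Set.Icc 0 p⁻¹)) (hg : ContinuousOn g (Set.Icc 0 p⁻¹)) (a b : ℝ) :
    pqInt p q (fun x => a * f x - b * g x) = a * pqInt p q f - b * pqInt p q g := by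
  have hsum := ((summable_pqInt hq hqp hf).mul_left a).tsum_sub
    ((summable_pqInt hq hqp hg).mul_left b)
  simp only [pqInt, tsum_mul_left] at hsum ⊢
  rw [mul_left_comm a, mul_left_comm b, ← mul_sub, ← hsum]
  congr 2 with k
  ring

theorem pqBeta_succ_general (p q : ℝ) (hq : 0 < q) (hqp : q < p)
    (m n : ℕ) (hm : 1 ≤ m) (hn : 1 ≤ n) :
    pqBeta p q m (n + 1) =
      p ^ (n - 1) * pqBeta p q m n - q ^ n * pqBeta p q (m + 1) n := by
  obtain ⟨m, rfl⟩ := Nat.exists_eq_add_of_le' hm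
  obtain ⟨n, rfl⟩ := Nat.exists_eq_add_of_le' hn
  have integrand_succ : (fun x => x ^ m * pqPow p q 1 (q * x) (n + 1)) = fun x =>
      p ^ n * (x ^ m * pqPow p q 1 (q * x) n) -
        q ^ (n + 1) * (x ^ (m + 1) * pqPow p q 1 (q * x) n) := by
    funext x
    rw [pqPow_succ]
    ring
  simp only [pqBeta, Nat.add_sub_cancel, integrand_succ]
  exact pqInt_mul_sub_mul hq.le hqp (by fun_prop) (by fun_prop) _ _

theorem pqBeta_succ (p q : ℝ) (hq : 0 < q) (hqp : q < p) (hp : p ≤ 1)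
    (m n : ℕ) (hm : 1 ≤ m) (hn : 1 ≤ n) :
    pqBeta p q m (n + 1) =
      p ^ (n - 1) * pqBeta p q m n - q ^ n * pqBeta p q (m + 1) n :=
  pqBeta_succ_general p q hq hqp m n hm hn
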